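/- arXiv:1907.03231 — 4 statements merged into one kernel-verified Lean document; each statement's English description precedes it below -/
import Mathlib

section
/- Let W be a discrete-time process on a finite probability space taking values in the standard basis vectors {e_1,...,e_N} of R^N, with filtration F_t generated by W, and suppose E[W_{t+1} | F_t] > 0 componentwise everywhere. Set M_{t+1} = W_{t+1} - E[W_{t+1} | F_t]. For F_t-measurable random matrices Z_t, Z̃_t valued in R^{K×N}, the following are equivalent: (i) Z_t M_{t+1} = Z̃_t M_{t+1} almost surely; (ii) there exists an F_t-measurable random vector C_t ∈ R^K such that Z_t = Z̃_t + C_t 1_N^* (i.e., the rows differ by a constant per row); (iii) Z_t Ĩ = Z̃_t Ĩ, where Ĩ is the N×(N-1) matrix whose first N-1 rows equal the identity I_{N-1} and whose last row is (-1,...,-1). -/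
open Finset Matrix

section Setup

variable {Ω : Type*} [Fintype Ω] [DecidableEq Ω] {N : ℕ}

/-- A probability on a finite sample space with everywhere-positive weights. -/
structure FinProb (Ω : Type*) [Fintype Ω] where
  p : Ω → ℝ
  pos : ∀ ω, 0 < p ω
  sum_one : ∑ ω, p ω = 1

/-- `ω` and `ω'` share the same `W`-path up to time `t` (the atoms of `F_t`). -/
def samePath (W : ℕ → Ω → Fin N) (t : ℕ) (ω ω' : Ω) : Prop :=
  ∀ s ∈ Finset.range (t + 1), W s ω = W s ω'

instance (W : ℕ → Ω → Fin N) (t : ℕ) (ω ω' : Ω) : Decidable (samePath W t ω ω') := by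
  unfold samePath; infer_instance

/-- `F_t`-measurability: `f` is constant on the atoms of `F_t`. -/
def measF (W : ℕ → Ω → Fin N) (t : ℕ) {α : Type*} (f : Ω → α) : Prop :=
  ∀ ω ω', samePath W t ω ω' → f ω = f ω'

/-- Conditional expectation given `F_t`. -/
noncomputable def cexp (P : FinProb Ω) (W : ℕ → Ω → Fin N) (t : ℕ)
    {E : Type*} [AddCommGroup E] [Module ℝ E] (Y : Ω → E) (ω : Ω) : E :=
  (∑ ω' ∈ univ.filter (fun ω' => samePath W t ω ω'), P.p ω')⁻¹ •
    ∑ ω' ∈ univ.filter (fun ω' => samePath W t ω ω'), P.p ω' • Y ω'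

/-- The basis-vector valued process `W_t ∈ {e_1,…,e_N} ⊆ ℝ^N`. -/
def wvec (W : ℕ → Ω → Fin N) (t : ℕ) (ω : Ω) : Fin N → ℝ :=
  fun j => if W t ω = j then 1 else 0

/-- `M_{t+1} = W_{t+1} - E[W_{t+1} | F_t]` (indexed so that `Mdiff P W t` is `M_{t+1}`). -/
noncomputable def Mdiff (P : FinProb Ω) (W : ℕ → Ω → Fin N) (t : ℕ) (ω : Ω) : Fin N → ℝ :=
  wvec W (t + 1) ω - cexp P W t (wvec W (t + 1)) ω

/-- One-step conditional transition probability `P_t^k = e_k^* E[W_{t+1}|F_t]`. -/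
noncomputable def Pt (P : FinProb Ω) (W : ℕ → Ω → Fin N) (t : ℕ) (k : Fin N) (ω : Ω) : ℝ :=
  cexp P W t (fun ω' => wvec W (t + 1) ω' k) ω

/-- The `N × (N-1)` matrix `Ĩ` whose top block is the identity and last row is all `-1`. -/
def Itil (n : ℕ) : Matrix (Fin (n + 1)) (Fin n) ℝ :=
  fun i j => if (i : ℕ) = (j : ℕ) then 1 else if (i : ℕ) = n then -1 else 0

end Setup

set_option linter.unusedSectionVars false

section Aux

variable {Ω : Type*} [Fintype Ω] [DecidableEq Ω] {N n K : ℕ}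

lemma samePath_refl (W : ℕ → Ω → Fin N) (t : ℕ) (ω : Ω) : samePath W t ω ω := fun _ _ => rfl

lemma samePath_symm {W : ℕ → Ω → Fin N} {t : ℕ} {ω ω' : Ω} (h : samePath W t ω ω') :
    samePath W t ω' ω := fun s hs => (h s hs).symm

lemma samePath_trans {W : ℕ → Ω → Fin N} {t : ℕ} {a b c : Ω}
    (h : samePath W t a b) (h' : samePath W t b c) : samePath W t a c :=
  fun s hs => (h s hs).trans (h' s hs)

lemma filter_samePath_eq {W : ℕ → Ω → Fin N} {t : ℕ} {ω ω' : Ω} (h : samePath W t ω ω') :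
    univ.filter (fun x => samePath W t ω x) = univ.filter (fun x => samePath W t ω' x) := by
  ext x
  simp only [mem_filter, mem_univ, true_and]
  exact ⟨fun hx => samePath_trans (samePath_symm h) hx, fun hx => samePath_trans h hx⟩

lemma atom_sum_pos (P : FinProb Ω) (W : ℕ → Ω → Fin N) (t : ℕ) (ω : Ω) :
    0 < ∑ ω' ∈ univ.filter (fun ω' => samePath W t ω ω'), P.p ω' :=
  Finset.sum_pos' (fun x _ => (P.pos x).le)
    ⟨ω, by simp [samePath_refl], P.pos ω⟩

lemma cexp_measF (P : FinProb Ω) (W : ℕ → Ω → Fin N) (t : ℕ)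
    {E : Type*} [AddCommGroup E] [Module ℝ E] (Y : Ω → E) :
    measF W t (cexp P W t Y) := by
  intro ω ω' h
  unfold cexp
  rw [filter_samePath_eq h]

lemma Pt_measF (P : FinProb Ω) (W : ℕ → Ω → Fin N) (t : ℕ) (k : Fin N) :
    measF W t (Pt P W t k) :=
  cexp_measF P W t _

lemma sum_wvec (W : ℕ → Ω → Fin N) (t : ℕ) (ω : Ω) : ∑ k, wvec W t ω k = 1 := by
  simp [wvec]

lemma sum_Pt (P : FinProb Ω) (W : ℕ → Ω → Fin N) (t : ℕ) (ω : Ω) :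
    ∑ k, Pt P W t k ω = 1 := by
  unfold Pt cexp
  simp only [smul_eq_mul, ← Finset.mul_sum]
  rw [Finset.sum_comm]
  have : ∀ ω' : Ω, ∑ k, P.p ω' * wvec W (t + 1) ω' k = P.p ω' := by
    intro ω'
    rw [← Finset.mul_sum, sum_wvec, mul_one]
  rw [Finset.sum_congr rfl (fun ω' _ => this ω')]
  exact inv_mul_cancel₀ (atom_sum_pos P W t ω).ne'

lemma Mdiff_apply (P : FinProb Ω) (W : ℕ → Ω → Fin N) (t : ℕ) (ω : Ω) (k : Fin N) :
    Mdiff P W t ω k = wvec W (t + 1) ω k - Pt P W t k ω := by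
  unfold Mdiff Pt cexp
  simp [Finset.sum_apply]

lemma sum_Mdiff (P : FinProb Ω) (W : ℕ → Ω → Fin N) (t : ℕ) (ω : Ω) :
    ∑ k, Mdiff P W t ω k = 0 := by
  simp only [Mdiff_apply, Finset.sum_sub_distrib, sum_wvec, sum_Pt, sub_self]

lemma reach (P : FinProb Ω) (W : ℕ → Ω → Fin N) (t : ℕ) {k : Fin N} {ω : Ω}
    (h : 0 < Pt P W t k ω) : ∃ ω', samePath W t ω ω' ∧ W (t + 1) ω' = k := by
  by_contra hc
  push_neg at hc
  refine absurd h ?_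
  simp only [Pt, cexp, not_lt]
  have hz : ∑ ω' ∈ univ.filter (fun ω' => samePath W t ω ω'),
      P.p ω' • wvec W (t + 1) ω' k = 0 := by
    refine Finset.sum_eq_zero fun x hx => ?_
    simp only [mem_filter, mem_univ, true_and] at hx
    simp [wvec, hc x hx]
  rw [hz, smul_zero]

lemma mul_Itil (A : Matrix (Fin K) (Fin (n + 1)) ℝ) (i : Fin K) (j : Fin n) :
    (A * Itil n) i j = A i j.castSucc - A i (Fin.last n) := by
  simp only [Matrix.mul_apply, Itil]
  rw [Fin.sum_univ_castSucc]
  simp only [Fin.coe_castSucc, Fin.val_last]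
  have hj : ¬ (n = (j : ℕ)) := (Nat.ne_of_lt j.isLt).symm
  rw [if_neg hj]
  have : ∀ k : Fin n,
      A i k.castSucc * (if (k : ℕ) = (j : ℕ) then (1:ℝ) else if (k : ℕ) = n then -1 else 0)
        = if k = j then A i k.castSucc else 0 := by
    intro k
    rcases eq_or_ne k j with rfl | hk
    · simp
    · rw [if_neg (fun h => hk (Fin.ext h)), if_neg (Nat.ne_of_lt k.isLt), mul_zero, if_neg hk]
  rw [Finset.sum_congr rfl (fun k _ => this k), Finset.sum_ite_eq' univ j
    (fun k => A i k.castSucc)]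
  simp [sub_eq_add_neg, mul_neg_one]

lemma rows_const (P : FinProb Ω) (W : ℕ → Ω → Fin N) (t : ℕ)
    (hpos : ∀ k ω, 0 < Pt P W t k ω)
    (Z Z' : Ω → Matrix (Fin K) (Fin N) ℝ) (hZ : measF W t Z) (hZ' : measF W t Z')
    (h : ∀ ω, (Z ω).mulVec (Mdiff P W t ω) = (Z' ω).mulVec (Mdiff P W t ω))
    (ω : Ω) (i : Fin K) (k : Fin N) :
    Z ω i k - Z' ω i k = ∑ j, (Z ω i j - Z' ω i j) * Pt P W t j ω := by
  obtain ⟨ω', hsp, hW⟩ := reach P W t (hpos k ω)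
  have h1 := congrFun (h ω') i
  simp only [Matrix.mulVec, dotProduct] at h1
  rw [← hZ ω ω' hsp, ← hZ' ω ω' hsp] at h1
  have h2 : ∑ j, (Z ω i j - Z' ω i j) * Mdiff P W t ω' j = 0 := by
    simp only [sub_mul, Finset.sum_sub_distrib, h1, sub_self]
  have h3 : ∀ j : Fin N, Mdiff P W t ω' j
      = (if k = j then (1:ℝ) else 0) - Pt P W t j ω := by
    intro j
    rw [Mdiff_apply, Pt_measF P W t j ω ω' hsp]
    simp [wvec, hW]
  simp only [h3, mul_sub, Finset.sum_sub_distrib, mul_ite, mul_one, mul_zero,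
    Finset.sum_ite_eq univ k (fun j => Z ω i j - Z' ω i j), mem_univ, if_true,
    sub_eq_zero] at h2
  exact h2

end Aux



/-- equivalence of the three characterizations of `∼_{M_{t+1}}`. -/
theorem stmt0 {Ω : Type*} [Fintype Ω] [DecidableEq Ω] {n K : ℕ}
    (P : FinProb Ω) (W : ℕ → Ω → Fin (n + 1)) (t : ℕ)
    (hpos : ∀ k ω, 0 < Pt P W t k ω)
    (Z Z' : Ω → Matrix (Fin K) (Fin (n + 1)) ℝ)
    (hZ : measF W t Z) (hZ' : measF W t Z') :
    ((∀ ω, (Z ω).mulVec (Mdiff P W t ω) = (Z' ω).mulVec (Mdiff P W t ω)) ↔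
      ∃ C : Ω → Fin K → ℝ, measF W t C ∧ ∀ ω i j, Z ω i j = Z' ω i j + C ω i) ∧
    ((∀ ω, (Z ω).mulVec (Mdiff P W t ω) = (Z' ω).mulVec (Mdiff P W t ω)) ↔
      ∀ ω, Z ω * Itil n = Z' ω * Itil n) := by
  have key : (∀ ω, (Z ω).mulVec (Mdiff P W t ω) = (Z' ω).mulVec (Mdiff P W t ω)) →
      ∀ ω i k, Z ω i k - Z' ω i k = ∑ j, (Z ω i j - Z' ω i j) * Pt P W t j ω :=
    fun h ω i k => rows_const P W t hpos Z Z' hZ hZ' h ω i k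
  have back : ∀ C : Ω → Fin K → ℝ, (∀ ω i j, Z ω i j = Z' ω i j + C ω i) →
      ∀ ω, (Z ω).mulVec (Mdiff P W t ω) = (Z' ω).mulVec (Mdiff P W t ω) := by
    intro C hC ω
    funext i
    simp only [Matrix.mulVec, dotProduct]
    calc ∑ j, Z ω i j * Mdiff P W t ω j
        = ∑ j, (Z' ω i j * Mdiff P W t ω j + C ω i * Mdiff P W t ω j) := by
          refine Finset.sum_congr rfl fun j _ => ?_
          rw [hC ω i j]; ring
      _ = (∑ j, Z' ω i j * Mdiff P W t ω j) + C ω i * ∑ j, Mdiff P W t ω j := by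
          rw [Finset.sum_add_distrib, Finset.mul_sum]
      _ = ∑ j, Z' ω i j * Mdiff P W t ω j := by rw [sum_Mdiff, mul_zero, add_zero]
  constructor
  · constructor
    · intro h
      refine ⟨fun ω i => ∑ j, (Z ω i j - Z' ω i j) * Pt P W t j ω, ?_, ?_⟩
      · intro ω ω' hsp
        funext i
        refine Finset.sum_congr rfl fun j _ => ?_
        rw [hZ ω ω' hsp, hZ' ω ω' hsp, Pt_measF P W t j ω ω' hsp]
      · intro ω i j
        have := key h ω i j
        linarith
    · rintro ⟨C, _, hC⟩
      exact back C hC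
  · constructor
    · intro h ω
      ext i j
      rw [mul_Itil, mul_Itil]
      have h1 := key h ω i j.castSucc
      have h2 := key h ω i (Fin.last n)
      linarith
    · intro h
      refine back (fun ω i => Z ω i (Fin.last n) - Z' ω i (Fin.last n)) ?_
      intro ω i j
      refine Fin.lastCases ?_ ?_ j
      · ring
      · intro j'
        have := Matrix.ext_iff.2 (h ω) i j'
        rw [mul_Itil, mul_Itil] at this
        linarith
end

section
/- Under the finite-state assumption, for any F_t-measurable Z_t ∈ R^{1×N}, with Z̃_t^k := Z_t^k - Z_t^N (k=1,...,N-1), the lower bound E[(Z_t M_{t+1})^2 | F_t] ≥ (1/2)(N-1)^{-1} min_{k∈{1,...,N}} P_t^k · Σ_{k=1}^{N-1} (Z̃_t^k)^2 holds, where P_t^k = e_k^* E[W_{t+1}|F_t]. -/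
open Finset Matrix

section Aux

variable {Ω : Type*} [Fintype Ω] [DecidableEq Ω] {N : ℕ}

lemma atom_eq (W : ℕ → Ω → Fin N) (t : ℕ) {ω ω' : Ω} (h : samePath W t ω ω') :
    (univ.filter (fun x => samePath W t ω' x)) = univ.filter (fun x => samePath W t ω x) := by
  ext x
  simp only [mem_filter, mem_univ, true_and]
  constructor
  · intro hx s hs; rw [h s hs]; exact hx s hs
  · intro hx s hs; rw [← h s hs]; exact hx s hs

lemma cexp_congr (P : FinProb Ω) (W : ℕ → Ω → Fin N) (t : ℕ)
    {E : Type*} [AddCommGroup E] [Module ℝ E] (Y : Ω → E) {ω ω' : Ω}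
    (h : samePath W t ω ω') : cexp P W t Y ω' = cexp P W t Y ω := by
  unfold cexp
  rw [atom_eq W t h]

lemma alg_bound {n : ℕ} (q v : Fin (n + 1) → ℝ) (hq : ∀ k, 0 < q k) :
    (1 / 2) * (n : ℝ)⁻¹ * (univ.inf' univ_nonempty q) *
      ∑ k : Fin n, (v k.castSucc - v (Fin.last n)) ^ 2 ≤ ∑ k, q k * v k ^ 2 := by
  have hRHS : 0 ≤ ∑ k, q k * v k ^ 2 :=
    Finset.sum_nonneg fun k _ => mul_nonneg (hq k).le (sq_nonneg _)
  rcases Nat.eq_zero_or_pos n with hn | hn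
  · subst hn
    simpa using hRHS
  have hi : 0 < univ.inf' univ_nonempty q := by
    rw [Finset.lt_inf'_iff]
    exact fun k _ => hq k
  set i := univ.inf' univ_nonempty q with hidef
  have hiq : ∀ k, i ≤ q k := fun k => Finset.inf'_le _ (mem_univ k)
  have h1 : i * ∑ k, v k ^ 2 ≤ ∑ k, q k * v k ^ 2 := by
    rw [Finset.mul_sum]
    exact Finset.sum_le_sum fun k _ =>
      mul_le_mul_of_nonneg_right (hiq k) (sq_nonneg _)
  have hsplit : ∑ k : Fin (n + 1), v k ^ 2
      = (∑ k : Fin n, v k.castSucc ^ 2) + v (Fin.last n) ^ 2 :=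
    Fin.sum_univ_castSucc _
  have hT : ∑ k : Fin n, (v k.castSucc - v (Fin.last n)) ^ 2
      ≤ 2 * n * ∑ k : Fin (n + 1), v k ^ 2 := by
    have step : ∑ k : Fin n, (v k.castSucc - v (Fin.last n)) ^ 2
        ≤ ∑ k : Fin n, (2 * v k.castSucc ^ 2 + 2 * v (Fin.last n) ^ 2) :=
      Finset.sum_le_sum fun k _ => by nlinarith [sq_nonneg (v k.castSucc + v (Fin.last n))]
    have hS : 0 ≤ ∑ k : Fin n, v k.castSucc ^ 2 :=
      Finset.sum_nonneg fun k _ => sq_nonneg _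
    have hcard : (∑ _k : Fin n, (2 * v (Fin.last n) ^ 2)) = 2 * n * v (Fin.last n) ^ 2 := by
      simp [Finset.sum_const, Finset.card_univ, nsmul_eq_mul]
      ring
    have hn1 : (1 : ℝ) ≤ n := by exact_mod_cast hn
    calc ∑ k : Fin n, (v k.castSucc - v (Fin.last n)) ^ 2
        ≤ ∑ k : Fin n, (2 * v k.castSucc ^ 2 + 2 * v (Fin.last n) ^ 2) := step
      _ = 2 * (∑ k : Fin n, v k.castSucc ^ 2) + 2 * n * v (Fin.last n) ^ 2 := by
          rw [Finset.sum_add_distrib, ← Finset.mul_sum, hcard]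
      _ ≤ 2 * n * ((∑ k : Fin n, v k.castSucc ^ 2) + v (Fin.last n) ^ 2) := by nlinarith
      _ = 2 * n * ∑ k : Fin (n + 1), v k ^ 2 := by rw [hsplit]
  have hne : (n : ℝ) ≠ 0 := by positivity
  calc (1 / 2) * (n : ℝ)⁻¹ * i * ∑ k : Fin n, (v k.castSucc - v (Fin.last n)) ^ 2
      ≤ (1 / 2) * (n : ℝ)⁻¹ * i * (2 * n * ∑ k : Fin (n + 1), v k ^ 2) := by
        apply mul_le_mul_of_nonneg_left hT
        positivity
    _ = i * ∑ k : Fin (n + 1), v k ^ 2 := by field_simp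
    _ ≤ ∑ k, q k * v k ^ 2 := h1

end Aux

/-- lower bound for the conditional second moment of `Z_t M_{t+1}`. -/
theorem stmt3 {Ω : Type*} [Fintype Ω] [DecidableEq Ω] {n : ℕ}
    (P : FinProb Ω) (W : ℕ → Ω → Fin (n + 1)) (t : ℕ)
    (hpos : ∀ k ω, 0 < Pt P W t k ω)
    (Z : Ω → Fin (n + 1) → ℝ) (hZ : measF W t Z) :
    ∀ ω, (1 / 2) * (n : ℝ)⁻¹ *
        (Finset.univ.inf' Finset.univ_nonempty (fun k : Fin (n + 1) => Pt P W t k ω)) *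
        ∑ k : Fin n, (Z ω k.castSucc - Z ω (Fin.last n)) ^ 2 ≤
      cexp P W t (fun ω' => (dotProduct (Z ω') (Mdiff P W t ω')) ^ 2) ω := by
  intro ω
  classical
  have hself : samePath W t ω ω := fun s _ => rfl
  set A := univ.filter (fun ω' => samePath W t ω ω') with hA
  have hωA : ω ∈ A := by simp [hA, hself]
  have hs : 0 < ∑ ω' ∈ A, P.p ω' := Finset.sum_pos (fun ω' _ => P.pos ω') ⟨ω, hωA⟩
  set s := ∑ ω' ∈ A, P.p ω' with hsdef
  set q : Fin (n + 1) → ℝ := fun k => Pt P W t k ω with hqdef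
  set m := ∑ k, q k * Z ω k with hm
  set v : Fin (n + 1) → ℝ := fun j => Z ω j - m with hv
  have hqval : ∀ k, q k = s⁻¹ * ∑ ω' ∈ A, P.p ω' * wvec W (t + 1) ω' k := by
    intro k
    simp only [hqdef, Pt, cexp, smul_eq_mul, ← hA, hsdef]
  have hcvec : ∀ j, cexp P W t (wvec W (t + 1)) ω j = q j := by
    intro j
    rw [hqval j]
    simp only [cexp, ← hA, Pi.smul_apply, Finset.sum_apply, Pi.smul_apply, smul_eq_mul, hsdef]
  have hdot : ∀ ω' ∈ A, dotProduct (Z ω') (Mdiff P W t ω') = v (W (t + 1) ω') := by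
    intro ω' hω'
    have hpath : samePath W t ω ω' := by simpa [hA] using hω'
    have hZω : Z ω' = Z ω := (hZ ω ω' hpath).symm
    have hc : cexp P W t (wvec W (t + 1)) ω' = cexp P W t (wvec W (t + 1)) ω :=
      cexp_congr P W t _ hpath
    have e1 : ∑ j, Z ω j * wvec W (t + 1) ω' j = Z ω (W (t + 1) ω') := by
      simp [wvec, mul_ite, Finset.sum_ite_eq]
    calc dotProduct (Z ω') (Mdiff P W t ω')
        = ∑ j, Z ω j * (wvec W (t + 1) ω' j - q j) := by
          simp only [dotProduct, Mdiff, hZω, hc, Pi.sub_apply]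
          exact Finset.sum_congr rfl fun j _ => by rw [hcvec j]
      _ = (∑ j, Z ω j * wvec W (t + 1) ω' j) - ∑ j, q j * Z ω j := by
          rw [← Finset.sum_sub_distrib]
          exact Finset.sum_congr rfl fun j _ => by ring
      _ = v (W (t + 1) ω') := by rw [e1, ← hm, hv]
  have hcexp : cexp P W t (fun ω' => (dotProduct (Z ω') (Mdiff P W t ω')) ^ 2) ω
      = ∑ k, q k * v k ^ 2 := by
    have e2 : ∀ ω' ∈ A, P.p ω' * (dotProduct (Z ω') (Mdiff P W t ω')) ^ 2
        = ∑ k, P.p ω' * wvec W (t + 1) ω' k * v k ^ 2 := by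
      intro ω' hω'
      rw [hdot ω' hω']
      simp [wvec, ite_mul, mul_ite, Finset.sum_ite_eq]
    calc cexp P W t (fun ω' => (dotProduct (Z ω') (Mdiff P W t ω')) ^ 2) ω
        = s⁻¹ * ∑ ω' ∈ A, P.p ω' * (dotProduct (Z ω') (Mdiff P W t ω')) ^ 2 := by
          simp only [cexp, ← hA, smul_eq_mul, hsdef]
      _ = s⁻¹ * ∑ ω' ∈ A, ∑ k, P.p ω' * wvec W (t + 1) ω' k * v k ^ 2 := by
          rw [Finset.sum_congr rfl e2]
      _ = ∑ k, (s⁻¹ * ∑ ω' ∈ A, P.p ω' * wvec W (t + 1) ω' k) * v k ^ 2 := by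
          rw [Finset.sum_comm, Finset.mul_sum]
          exact Finset.sum_congr rfl fun k _ => by rw [mul_assoc, Finset.sum_mul]
      _ = ∑ k, q k * v k ^ 2 := Finset.sum_congr rfl fun k _ => by rw [← hqval k]
  rw [hcexp]
  have hvq : ∀ k, 0 < q k := fun k => hpos k ω
  have := alg_bound q v hvq
  have hsum : ∑ k : Fin n, (v k.castSucc - v (Fin.last n)) ^ 2
      = ∑ k : Fin n, (Z ω k.castSucc - Z ω (Fin.last n)) ^ 2 :=
    Finset.sum_congr rfl fun k _ => by simp only [hv]; ring
  rw [hsum] at this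
  exact this
end

section
/- (Explicit martingale representation.) Under the finite-state assumption with strictly positive conditional transition probabilities, for any F_{t+1}-measurable random vector Y ∈ R^K, the F_t-measurable matrix Z_t := Σ_{i=1}^N (E[Y · 1_{W_{t+1}=e_i} | F_t] / P_t^i) e_i^* satisfies Y - E[Y|F_t] = Z_t M_{t+1} almost surely. -/
open Finset Matrix

/-- explicit martingale representation. -/
theorem stmt5 {Ω : Type*} [Fintype Ω] [DecidableEq Ω] {n K : ℕ}
    (P : FinProb Ω) (W : ℕ → Ω → Fin (n + 1)) (t : ℕ)
    (hpos : ∀ k ω, 0 < Pt P W t k ω)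
    (Y : Ω → Fin K → ℝ) (hY : measF W (t + 1) Y) :
    ∀ ω i, Y ω i - cexp P W t Y ω i =
      Matrix.mulVec
        (Matrix.of fun i j => cexp P W t (fun ω' => Y ω' i * wvec W (t + 1) ω' j) ω / Pt P W t j ω)
        (Mdiff P W t ω) i := by
  intro ω i
  classical
  set j0 := W (t + 1) ω with hj0
  have hPt : ∀ j, Pt P W t j ω ≠ 0 := fun j => (hpos j ω).ne'
  have hcomp : ∀ (f : Ω → Fin (n + 1) → ℝ) j,
      cexp P W t f ω j = cexp P W t (fun ω' => f ω' j) ω := by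
    intro f j
    simp [cexp, Finset.sum_apply, Pi.smul_apply]
  have hM : ∀ j, Mdiff P W t ω j = wvec W (t + 1) ω j - Pt P W t j ω := by
    intro j
    simp only [Mdiff, Pt, Pi.sub_apply, hcomp]
  have key : cexp P W t (fun ω' => Y ω' i * wvec W (t + 1) ω' j0) ω
      = Y ω i * Pt P W t j0 ω := by
    simp only [cexp, Pt, smul_eq_mul, Finset.mul_sum]
    refine Finset.sum_congr rfl ?_
    intro ω' hω'
    simp only [Finset.mem_filter] at hω'
    by_cases h : W (t + 1) ω' = j0
    · have hsp : samePath W (t + 1) ω ω' := by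
        intro s hs
        have hs' := Finset.mem_range_succ_iff.mp hs
        rcases Nat.lt_or_ge s (t + 1) with h1 | h1
        · exact hω'.2 s (Finset.mem_range.mpr h1)
        · have : s = t + 1 := le_antisymm hs' h1
          subst this; exact h.symm
      have hYe := hY ω ω' hsp
      have : Y ω' i = Y ω i := by rw [hYe]
      rw [this]
      ring
    · simp [wvec, h]
  have hsum : ∑ j, cexp P W t (fun ω' => Y ω' i * wvec W (t + 1) ω' j) ω
      = cexp P W t Y ω i := by
    simp only [cexp, smul_eq_mul, Finset.sum_apply, Pi.smul_apply]
    rw [← Finset.mul_sum, Finset.sum_comm]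
    congr 1
    refine Finset.sum_congr rfl fun ω' _ => ?_
    rw [← Finset.mul_sum, ← Finset.mul_sum]
    simp [wvec]
  have hstep : ∀ j,
      (cexp P W t (fun ω' => Y ω' i * wvec W (t + 1) ω' j) ω / Pt P W t j ω)
        * Mdiff P W t ω j
      = (cexp P W t (fun ω' => Y ω' i * wvec W (t + 1) ω' j) ω / Pt P W t j ω)
          * wvec W (t + 1) ω j
        - cexp P W t (fun ω' => Y ω' i * wvec W (t + 1) ω' j) ω := by
    intro j
    rw [hM j, mul_sub, div_mul_cancel₀ _ (hPt j)]
  have hpick : ∑ j, (cexp P W t (fun ω' => Y ω' i * wvec W (t + 1) ω' j) ω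
      / Pt P W t j ω) * wvec W (t + 1) ω j = Y ω i := by
    rw [Finset.sum_eq_single j0]
    · have : wvec W (t + 1) ω j0 = 1 := by simp [wvec, hj0]
      rw [this, mul_one, key, mul_div_assoc, div_self (hPt j0), mul_one]
    · intro j _ hne
      have : wvec W (t + 1) ω j = 0 := by
        simp [wvec]
        intro h; exact absurd h.symm hne
      rw [this, mul_zero]
    · intro h; exact absurd (Finset.mem_univ j0) h
  simp only [Matrix.mulVec, dotProduct, Matrix.of_apply]
  rw [Finset.sum_congr rfl (fun j _ => hstep j), Finset.sum_sub_distrib, hsum, hpick]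
end

section
/- (Uniqueness for monotone nonlinear FBSΔE.) Consider the fully coupled system ΔX_t = b(t,X_t,Y_t,Z_t Ĩ) + σ(t,X_t,Y_t,Z_t Ĩ) M_{t+1}, ΔY_t = -f(t+1,X_{t+1},Y_{t+1},Z_{t+1} Ĩ) + Z_t M_{t+1}, X_0 = x_0, Y_T = h(X_T). Assume the coefficients are uniformly Lipschitz and satisfy the monotone conditions: ⟨A(t,λ)-A(t,λ'), λ-λ'⟩ ≤ -c₂|λ-λ'|² for 1 ≤ t ≤ T-1 where A(t,λ) = (-f(t,λ), b(t,λ), σ(t,λ)E[M_{t+1}M_{t+1}^*|F_t]); ⟨-f(T,x,y,zĨ)+f(T,x',y',z'Ĩ), x-x'⟩ ≤ -c₂|x-x'|²; the analogous condition on b and σ at t = 0; and ⟨h(x)-h(x'), x-x'⟩ ≥ c₂|x-x'|². Then any two adapted solutions (X,Y,Z), (X',Y',Z') satisfy X = X', Y = Y', and Z_t M_{t+1} = Z'_t M_{t+1} for all t. -/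
open Finset Matrix

section NonlinearDefs

variable {Ω : Type*} [Fintype Ω] [DecidableEq Ω]

/-- `E[M_{t+1} M_{t+1}^* | F_t]`. -/
noncomputable def EMM {n : ℕ} (P : FinProb Ω) (W : ℕ → Ω → Fin (n + 1)) (t : ℕ) (ω : Ω) :
    Matrix (Fin (n + 1)) (Fin (n + 1)) ℝ :=
  cexp P W t (fun ω' => Matrix.of fun i j => Mdiff P W t ω' i * Mdiff P W t ω' j) ω

/-- Euclidean norm of a finite real vector. -/
noncomputable def nr {m : ℕ} (v : Fin m → ℝ) : ℝ := Real.sqrt (∑ j, v j ^ 2)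

/-- the row vector `z Ĩ`. -/
def zItil {n : ℕ} (z : Fin (n + 1) → ℝ) : Fin n → ℝ := Matrix.vecMul z (Itil n)

end NonlinearDefs

-- AUX development
namespace S15
variable {Ω : Type*} [Fintype Ω] [DecidableEq Ω] {N : ℕ}

lemma sp_refl (W : ℕ → Ω → Fin N) (t : ℕ) (ω : Ω) : samePath W t ω ω := fun _ _ => rfl
lemma sp_symm {W : ℕ → Ω → Fin N} {t : ℕ} {ω ω' : Ω} (h : samePath W t ω ω') :
    samePath W t ω' ω := fun s hs => (h s hs).symm
lemma sp_trans {W : ℕ → Ω → Fin N} {t : ℕ} {a b c : Ω} (h : samePath W t a b)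
    (h' : samePath W t b c) : samePath W t a c := fun s hs => (h s hs).trans (h' s hs)

lemma atom_eq {W : ℕ → Ω → Fin N} {t : ℕ} {ω ω' : Ω} (h : samePath W t ω ω') :
    univ.filter (fun a => samePath W t ω a) = univ.filter (fun a => samePath W t ω' a) := by
  ext a
  simp only [mem_filter, mem_univ, true_and]
  exact ⟨fun ha => sp_trans (sp_symm h) ha, fun ha => sp_trans h ha⟩

lemma S_pos (P : FinProb Ω) (W : ℕ → Ω → Fin N) (t : ℕ) (ω : Ω) :
    0 < ∑ ω' ∈ univ.filter (fun a => samePath W t ω a), P.p ω' :=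
  Finset.sum_pos (fun i _ => P.pos i) ⟨ω, by simp [sp_refl]⟩

lemma cexp_apply (P : FinProb Ω) (W : ℕ → Ω → Fin N) (t : ℕ) {m : ℕ}
    (Y : Ω → Fin m → ℝ) (ω : Ω) (j : Fin m) :
    cexp P W t Y ω j = cexp P W t (fun ω' => Y ω' j) ω := by
  simp [cexp, Finset.sum_apply, Pi.smul_apply, smul_eq_mul]

lemma EMM_apply {n : ℕ} (P : FinProb Ω) (W : ℕ → Ω → Fin (n + 1)) (t : ℕ) (ω : Ω)
    (i j : Fin (n + 1)) :
    EMM P W t ω i j = cexp P W t (fun ω' => Mdiff P W t ω' i * Mdiff P W t ω' j) ω := by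
  simp [EMM, cexp, Matrix.sum_apply, smul_eq_mul]

-- scalar cexp formula
lemma cexp_def (P : FinProb Ω) (W : ℕ → Ω → Fin N) (t : ℕ) (Y : Ω → ℝ) (ω : Ω) :
    cexp P W t Y ω = (∑ ω' ∈ univ.filter (fun a => samePath W t ω a), P.p ω')⁻¹ *
      ∑ ω' ∈ univ.filter (fun a => samePath W t ω a), P.p ω' * Y ω' := by
  simp [cexp, smul_eq_mul]

lemma cexp_measF (P : FinProb Ω) (W : ℕ → Ω → Fin N) (t : ℕ) (Y : Ω → ℝ)
    {ω ω' : Ω} (h : samePath W t ω ω') : cexp P W t Y ω = cexp P W t Y ω' := by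
  rw [cexp_def, cexp_def, atom_eq h]

lemma cexp_of_measF (P : FinProb Ω) (W : ℕ → Ω → Fin N) (t : ℕ) {g : Ω → ℝ}
    (hg : measF W t g) (ω : Ω) : cexp P W t g ω = g ω := by
  rw [cexp_def]
  have : ∀ ω' ∈ univ.filter (fun a => samePath W t ω a), P.p ω' * g ω' = P.p ω' * g ω := by
    intro ω' hω'
    simp only [mem_filter] at hω'
    rw [hg ω' ω (sp_symm hω'.2)]
  rw [Finset.sum_congr rfl this, ← Finset.sum_mul]
  field_simp [(S_pos P W t ω).ne']

lemma cexp_sub (P : FinProb Ω) (W : ℕ → Ω → Fin N) (t : ℕ) (Y Y' : Ω → ℝ) (ω : Ω) :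
    cexp P W t (fun a => Y a - Y' a) ω = cexp P W t Y ω - cexp P W t Y' ω := by
  simp [cexp_def, mul_sub, Finset.sum_sub_distrib, mul_sub]

lemma Mdiff_apply (P : FinProb Ω) (W : ℕ → Ω → Fin N) (t : ℕ) (ω : Ω) (j : Fin N) :
    Mdiff P W t ω j = wvec W (t+1) ω j - cexp P W t (fun ω' => wvec W (t+1) ω' j) ω := by
  simp [Mdiff, cexp_apply]

lemma cexp_Mdiff (P : FinProb Ω) (W : ℕ → Ω → Fin N) (t : ℕ) (ω : Ω) (j : Fin N) :
    cexp P W t (fun ω' => Mdiff P W t ω' j) ω = 0 := by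
  have : (fun ω' => Mdiff P W t ω' j)
      = fun ω' => wvec W (t+1) ω' j - cexp P W t (fun a => wvec W (t+1) a j) ω' := by
    funext ω'; exact Mdiff_apply P W t ω' j
  rw [this, cexp_sub, cexp_of_measF P W t (fun a b hab => cexp_measF P W t _ hab), sub_eq_zero]


set_option linter.unusedSectionVars false

lemma key (P : FinProb Ω) (W : ℕ → Ω → Fin N) (t : ℕ) (g Y : Ω → ℝ)
    (hg : measF W t g) :
    ∑ ω, P.p ω * (g ω * Y ω) = ∑ ω, P.p ω * (g ω * cexp P W t Y ω) := by
  have hrhs : ∀ ω, P.p ω * (g ω * cexp P W t Y ω)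
      = ∑ ω', if samePath W t ω ω' then
          P.p ω * g ω * (∑ a ∈ univ.filter (fun a => samePath W t ω a), P.p a)⁻¹
            * (P.p ω' * Y ω') else 0 := by
    intro ω
    rw [cexp_def, ← Finset.sum_filter]; simp only [Finset.mul_sum]
    exact Finset.sum_congr rfl fun ω' _ => by ring
  have hlhs : ∀ ω', P.p ω' * (g ω' * Y ω')
      = ∑ ω, if samePath W t ω ω' then
          P.p ω * g ω * (∑ a ∈ univ.filter (fun a => samePath W t ω a), P.p a)⁻¹
            * (P.p ω' * Y ω') else 0 := by
    intro ω'
    have : ∀ ω, (if samePath W t ω ω' then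
          P.p ω * g ω * (∑ a ∈ univ.filter (fun a => samePath W t ω a), P.p a)⁻¹
            * (P.p ω' * Y ω') else 0)
        = (if samePath W t ω' ω then P.p ω else 0) *
            (g ω' * (∑ a ∈ univ.filter (fun a => samePath W t ω' a), P.p a)⁻¹
              * (P.p ω' * Y ω')) := by
      intro ω
      by_cases hss : samePath W t ω ω'
      · rw [if_pos hss, if_pos (sp_symm hss), hg ω ω' hss, atom_eq hss]; ring
      · rw [if_neg hss, if_neg (fun hss' => hss (sp_symm hss')), zero_mul]
    rw [Finset.sum_congr rfl (fun ω _ => this ω), ← Finset.sum_mul, ← Finset.sum_filter]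
    field_simp [(S_pos P W t ω').ne']
  calc ∑ ω, P.p ω * (g ω * Y ω)
      = ∑ ω', ∑ ω, (if samePath W t ω ω' then
          P.p ω * g ω * (∑ a ∈ univ.filter (fun a => samePath W t ω a), P.p a)⁻¹
            * (P.p ω' * Y ω') else 0) :=
        Finset.sum_congr rfl fun ω' _ => hlhs ω'
    _ = ∑ ω, P.p ω * (g ω * cexp P W t Y ω) := by
        rw [Finset.sum_comm]
        exact Finset.sum_congr rfl fun ω _ => (hrhs ω).symm

lemma mart (P : FinProb Ω) (W : ℕ → Ω → Fin N) (t : ℕ) (g : Ω → ℝ)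
    (hg : measF W t g) (u : Ω → Fin N → ℝ) (hu : ∀ j, measF W t (fun ω => u ω j)) :
    ∑ ω, P.p ω * (g ω * dotProduct (u ω) (Mdiff P W t ω)) = 0 := by
  have : ∀ ω, P.p ω * (g ω * dotProduct (u ω) (Mdiff P W t ω))
      = ∑ j, P.p ω * ((g ω * u ω j) * Mdiff P W t ω j) := by
    intro ω
    simp only [dotProduct, Finset.mul_sum]
    exact Finset.sum_congr rfl fun j _ => by ring
  rw [Finset.sum_congr rfl fun ω _ => this ω, Finset.sum_comm]
  apply Finset.sum_eq_zero
  intro j _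
  rw [key P W t (fun ω => g ω * u ω j) (fun ω => Mdiff P W t ω j)
    (fun ω ω' hss => by
      show g ω * u ω j = g ω' * u ω' j
      rw [hg ω ω' hss, show u ω j = u ω' j from hu j ω ω' hss])]
  simp [cexp_Mdiff]

lemma quad {n : ℕ} (P : FinProb Ω) (W : ℕ → Ω → Fin (n+1)) (t : ℕ)
    (u v : Ω → Fin (n+1) → ℝ) (hu : ∀ j, measF W t (fun ω => u ω j))
    (hv : ∀ j, measF W t (fun ω => v ω j)) :
    ∑ ω, P.p ω * (dotProduct (u ω) (Mdiff P W t ω) * dotProduct (v ω) (Mdiff P W t ω))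
      = ∑ ω, P.p ω * dotProduct (Matrix.vecMul (u ω) (EMM P W t ω)) (v ω) := by
  have h1 : ∀ ω, P.p ω * (dotProduct (u ω) (Mdiff P W t ω) * dotProduct (v ω) (Mdiff P W t ω))
      = ∑ i, ∑ j, P.p ω * ((u ω i * v ω j) * (Mdiff P W t ω i * Mdiff P W t ω j)) := by
    intro ω
    rw [show dotProduct (u ω) (Mdiff P W t ω) * dotProduct (v ω) (Mdiff P W t ω)
        = ∑ i, ∑ j, (u ω i * v ω j) * (Mdiff P W t ω i * Mdiff P W t ω j) from by
      rw [dotProduct, dotProduct, Finset.sum_mul_sum]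
      exact Finset.sum_congr rfl fun i _ => Finset.sum_congr rfl fun j _ => by ring]
    simp only [Finset.mul_sum]
  have h2 : ∀ ω, P.p ω * dotProduct (Matrix.vecMul (u ω) (EMM P W t ω)) (v ω)
      = ∑ i, ∑ j, P.p ω * ((u ω i * v ω j) * EMM P W t ω i j) := by
    intro ω
    simp only [dotProduct, Matrix.vecMul, Finset.sum_mul, Finset.mul_sum]
    rw [Finset.sum_comm]
    exact Finset.sum_congr rfl fun i _ => Finset.sum_congr rfl fun j _ => by ring
  rw [Finset.sum_congr rfl fun ω _ => h1 ω, Finset.sum_congr rfl fun ω _ => h2 ω,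
    Finset.sum_comm]
  rw [show (∑ ω, ∑ i, ∑ j, P.p ω * (u ω i * v ω j * EMM P W t ω i j))
      = ∑ i, ∑ ω, ∑ j, P.p ω * (u ω i * v ω j * EMM P W t ω i j) from Finset.sum_comm]
  apply Finset.sum_congr rfl
  intro i _
  rw [Finset.sum_comm]
  rw [show (∑ ω, ∑ j, P.p ω * (u ω i * v ω j * EMM P W t ω i j))
      = ∑ j, ∑ ω, P.p ω * (u ω i * v ω j * EMM P W t ω i j) from Finset.sum_comm]
  apply Finset.sum_congr rfl
  intro j _
  have := key P W t (fun ω => u ω i * v ω j)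
    (fun ω => Mdiff P W t ω i * Mdiff P W t ω j)
    (fun ω ω' hss => by
      show u ω i * v ω j = u ω' i * v ω' j
      rw [show u ω i = u ω' i from hu i ω ω' hss, show v ω j = v ω' j from hv j ω ω' hss])
  calc ∑ ω, P.p ω * (u ω i * v ω j * (Mdiff P W t ω i * Mdiff P W t ω j)) = _ := this
    _ = ∑ ω, P.p ω * (u ω i * v ω j * EMM P W t ω i j) :=
      Finset.sum_congr rfl fun ω _ => by rw [EMM_apply]

lemma sum_wvec (W : ℕ → Ω → Fin N) (t : ℕ) (ω : Ω) [NeZero N] :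
    ∑ j, wvec W t ω j = 1 := by
  simp [wvec]

lemma sum_Mdiff {n : ℕ} (P : FinProb Ω) (W : ℕ → Ω → Fin (n+1)) (t : ℕ) (ω : Ω) :
    ∑ j, Mdiff P W t ω j = 0 := by
  have h1 : ∀ a : Ω, ∑ j, wvec W (t+1) a j = 1 := fun a => by simp [wvec]
  simp only [Mdiff_apply, Finset.sum_sub_distrib, h1]
  rw [show (∑ j, cexp P W t (fun ω' => wvec W (t+1) ω' j) ω)
      = cexp P W t (fun ω' => ∑ j, wvec W (t+1) ω' j) ω from by
    simp only [cexp_def, Finset.mul_sum]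
    rw [Finset.sum_comm]]
  simp only [h1]
  rw [show cexp P W t (fun _ => (1:ℝ)) ω = 1 from by
    rw [cexp_def]; simp only [mul_one]; field_simp [(S_pos P W t ω).ne']]
  norm_num

lemma zItil_eq {n : ℕ} (z : Fin (n+1) → ℝ) (j : Fin n) :
    zItil z j = z j.castSucc - z (Fin.last n) := by
  simp only [zItil, Matrix.vecMul, dotProduct, Itil]
  rw [Fin.sum_univ_castSucc]
  have hlast : ((Fin.last n : Fin (n+1)) : ℕ) = n := rfl
  have hj : ¬ ((Fin.last n : Fin (n+1)) : ℕ) = (j : ℕ) := by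
    rw [hlast]; exact fun hh => by have := j.isLt; omega
  rw [show (∑ i : Fin n, z i.castSucc *
      (if ((i.castSucc : Fin (n+1)) : ℕ) = (j : ℕ) then (1:ℝ)
        else if ((i.castSucc : Fin (n+1)) : ℕ) = n then -1 else 0))
      = ∑ i : Fin n, (if i = j then z i.castSucc else 0) from
    Finset.sum_congr rfl fun i _ => by
      have hc : ((i.castSucc : Fin (n+1)) : ℕ) = (i : ℕ) := rfl
      by_cases hij : i = j
      · subst hij; simp [hc]
      · have : ¬ ((i:ℕ) = (j:ℕ)) := fun hh => hij (Fin.ext hh)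
        have hn : ¬ ((i:ℕ) = n) := fun hh => by have := i.isLt; omega
        simp [hc, this, hn, hij]]
  rw [Finset.sum_ite_eq' univ j fun i => z i.castSucc, if_pos (mem_univ j),
    if_neg hj, if_pos hlast]
  ring

lemma ex_zero (P : FinProb Ω) {φ : Ω → ℝ} (hnn : ∀ ω, 0 ≤ φ ω)
    (hz : ∑ ω, P.p ω * φ ω = 0) : ∀ ω, φ ω = 0 := by
  intro ω
  have h1 : ∀ a ∈ (univ : Finset Ω), 0 ≤ P.p a * φ a :=
    fun a _ => mul_nonneg (P.pos a).le (hnn a)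
  have := (Finset.sum_eq_zero_iff_of_nonneg h1).1 hz ω (mem_univ ω)
  have hp := (P.pos ω).ne'
  rcases mul_eq_zero.1 this with h | h
  · exact absurd h hp
  · exact h

lemma nr_nonneg {m : ℕ} (w : Fin m → ℝ) : 0 ≤ nr w := Real.sqrt_nonneg _

lemma nr_eq_zero {m : ℕ} {w : Fin m → ℝ} (hw : nr w = 0) : ∀ j, w j = 0 := by
  have hnn : 0 ≤ ∑ j, w j ^ 2 := Finset.sum_nonneg fun j _ => sq_nonneg _
  have hsum : ∑ j, w j ^ 2 = 0 := by
    have := (Real.sqrt_eq_zero hnn).1 hw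
    exact this
  intro j
  have := (Finset.sum_eq_zero_iff_of_nonneg (fun j (_ : j ∈ univ) => sq_nonneg (w j))).1
    hsum j (mem_univ j)
  exact sq_eq_zero_iff.1 this

end S15

open S15 in
set_option maxHeartbeats 1000000 in
/-- uniqueness for the monotone nonlinear FBSΔE. -/
theorem stmt15 {Ω : Type*} [Fintype Ω] [DecidableEq Ω] {n : ℕ}
    (P : FinProb Ω) (W : ℕ → Ω → Fin (n + 1)) (T : ℕ) (hT : 1 ≤ T)
    (hpos : ∀ t < T, ∀ k ω, 0 < Pt P W t k ω)
    (c1 c2 : ℝ) (hc1 : 0 < c1) (hc2 : 0 < c2)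
    (b f : ℕ → Ω → ℝ → ℝ → (Fin n → ℝ) → ℝ)
    (σ : ℕ → Ω → ℝ → ℝ → (Fin n → ℝ) → (Fin (n + 1) → ℝ))
    (h : Ω → ℝ → ℝ) (x0 : ℝ)
    (hbad : ∀ t x y zi, measF W t (fun ω => b t ω x y zi))
    (hsad : ∀ t x y zi, measF W t (fun ω => σ t ω x y zi))
    (hfad : ∀ t x y zi, measF W t (fun ω => f t ω x y zi))
    (hhad : measF W T h)
    (hfT : ∀ ω x y zi zi', f T ω x y zi = f T ω x y zi')
    (hLip : ∀ t < T, ∀ ω x y (zi : Fin n → ℝ) x' y' (zi' : Fin n → ℝ),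
      |f t ω x y zi - f t ω x' y' zi'| + |b t ω x y zi - b t ω x' y' zi'| +
          nr (Matrix.vecMul (σ t ω x y zi - σ t ω x' y' zi') (EMM P W t ω)) ≤
        c1 * (|x - x'| + |y - y'| + nr (zi - zi')))
    (hLipfT : ∀ ω x y (zi : Fin n → ℝ) x' y' (zi' : Fin n → ℝ),
      |f T ω x y zi - f T ω x' y' zi'| ≤ c1 * (|x - x'| + |y - y'|))
    (hLiph : ∀ ω x x', |h ω x - h ω x'| ≤ c1 * |x - x'|)
    (hmono : ∀ t, 1 ≤ t → t < T → ∀ ω x y x' y' (z z' : Fin (n + 1) → ℝ),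
      (-(f t ω x y (zItil z)) + f t ω x' y' (zItil z')) * (x - x') +
          (b t ω x y (zItil z) - b t ω x' y' (zItil z')) * (y - y') +
          dotProduct
            (Matrix.vecMul (σ t ω x y (zItil z) - σ t ω x' y' (zItil z')) (EMM P W t ω))
            (z - z') ≤
        -c2 * (|x - x'| + |y - y'| + nr (zItil (z - z'))) ^ 2)
    (hmonoT : ∀ ω x y x' y' (zi zi' : Fin n → ℝ),
      (-(f T ω x y zi) + f T ω x' y' zi') * (x - x') ≤ -c2 * (x - x') ^ 2)
    (hmono0 : ∀ ω x y x' y' (z z' : Fin (n + 1) → ℝ),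
      (b 0 ω x y (zItil z) - b 0 ω x' y' (zItil z')) * (y - y') +
          dotProduct
            (Matrix.vecMul (σ 0 ω x y (zItil z) - σ 0 ω x' y' (zItil z')) (EMM P W 0 ω))
            (z - z') ≤
        -c2 * ((y - y') ^ 2 + nr (zItil (z - z')) ^ 2))
    (hmonoh : ∀ ω x x', (h ω x - h ω x') * (x - x') ≥ c2 * (x - x') ^ 2)
    (X Y : ℕ → Ω → ℝ) (Z : ℕ → Ω → Fin (n + 1) → ℝ)
    (X' Y' : ℕ → Ω → ℝ) (Z' : ℕ → Ω → Fin (n + 1) → ℝ)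
    (hsol : ((∀ t ≤ T, measF W t (X t)) ∧ (∀ t ≤ T, measF W t (Y t)) ∧
        (∀ t < T, measF W t (Z t)) ∧
        (∀ t < T, ∀ ω, X (t + 1) ω - X t ω =
            b t ω (X t ω) (Y t ω) (zItil (Z t ω)) +
            dotProduct (σ t ω (X t ω) (Y t ω) (zItil (Z t ω))) (Mdiff P W t ω)) ∧
        (∀ t < T, ∀ ω, Y (t + 1) ω - Y t ω =
            -(f (t + 1) ω (X (t + 1) ω) (Y (t + 1) ω) (zItil (Z (t + 1) ω))) +
            dotProduct (Z t ω) (Mdiff P W t ω)) ∧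
        (∀ ω, X 0 ω = x0) ∧ (∀ ω, Y T ω = h ω (X T ω))))
    (hsol' : ((∀ t ≤ T, measF W t (X' t)) ∧ (∀ t ≤ T, measF W t (Y' t)) ∧
        (∀ t < T, measF W t (Z' t)) ∧
        (∀ t < T, ∀ ω, X' (t + 1) ω - X' t ω =
            b t ω (X' t ω) (Y' t ω) (zItil (Z' t ω)) +
            dotProduct (σ t ω (X' t ω) (Y' t ω) (zItil (Z' t ω))) (Mdiff P W t ω)) ∧
        (∀ t < T, ∀ ω, Y' (t + 1) ω - Y' t ω =
            -(f (t + 1) ω (X' (t + 1) ω) (Y' (t + 1) ω) (zItil (Z' (t + 1) ω))) +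
            dotProduct (Z' t ω) (Mdiff P W t ω)) ∧
        (∀ ω, X' 0 ω = x0) ∧ (∀ ω, Y' T ω = h ω (X' T ω)))) :
    (∀ t ≤ T, ∀ ω, X t ω = X' t ω ∧ Y t ω = Y' t ω) ∧
    (∀ t < T, ∀ ω, dotProduct (Z t ω) (Mdiff P W t ω) =
        dotProduct (Z' t ω) (Mdiff P W t ω)) := by
  obtain ⟨hXm, hYm, hZm, hXe, hYe, hX0, hYT⟩ := hsol
  obtain ⟨hXm', hYm', hZm', hXe', hYe', hX0', hYT'⟩ := hsol'
  set xh : ℕ → Ω → ℝ := fun t ω => X t ω - X' t ω with hxhdef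
  set yh : ℕ → Ω → ℝ := fun t ω => Y t ω - Y' t ω with hyhdef
  set zh : ℕ → Ω → Fin (n+1) → ℝ := fun t ω => Z t ω - Z' t ω with hzhdef
  set bh : ℕ → Ω → ℝ := fun t ω =>
    b t ω (X t ω) (Y t ω) (zItil (Z t ω)) - b t ω (X' t ω) (Y' t ω) (zItil (Z' t ω))
    with hbhdef
  set fh : ℕ → Ω → ℝ := fun t ω =>
    f t ω (X t ω) (Y t ω) (zItil (Z t ω)) - f t ω (X' t ω) (Y' t ω) (zItil (Z' t ω))
    with hfhdef
  set sh : ℕ → Ω → Fin (n+1) → ℝ := fun t ω =>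
    σ t ω (X t ω) (Y t ω) (zItil (Z t ω)) - σ t ω (X' t ω) (Y' t ω) (zItil (Z' t ω))
    with hshdef
  -- measurability of differences
  have hxhm : ∀ t ≤ T, measF W t (xh t) := by
    intro t ht ω ω' hss
    show X t ω - X' t ω = X t ω' - X' t ω'
    rw [hXm t ht ω ω' hss, hXm' t ht ω ω' hss]
  have hyhm : ∀ t ≤ T, measF W t (yh t) := by
    intro t ht ω ω' hss
    show Y t ω - Y' t ω = Y t ω' - Y' t ω'
    rw [hYm t ht ω ω' hss, hYm' t ht ω ω' hss]
  have hzhm : ∀ t < T, ∀ j, measF W t (fun ω => zh t ω j) := by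
    intro t ht j ω ω' hss
    show (Z t ω - Z' t ω) j = (Z t ω' - Z' t ω') j
    rw [hZm t ht ω ω' hss, hZm' t ht ω ω' hss]
  have hbhm : ∀ t < T, measF W t (bh t) := by
    intro t ht ω ω' hss
    show b t ω (X t ω) (Y t ω) (zItil (Z t ω)) - b t ω (X' t ω) (Y' t ω) (zItil (Z' t ω))
      = b t ω' (X t ω') (Y t ω') (zItil (Z t ω')) -
        b t ω' (X' t ω') (Y' t ω') (zItil (Z' t ω'))
    have hb1 : b t ω (X t ω') (Y t ω') (zItil (Z t ω'))
        = b t ω' (X t ω') (Y t ω') (zItil (Z t ω')) :=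
      hbad t (X t ω') (Y t ω') (zItil (Z t ω')) ω ω' hss
    have hb2 : b t ω (X' t ω') (Y' t ω') (zItil (Z' t ω'))
        = b t ω' (X' t ω') (Y' t ω') (zItil (Z' t ω')) :=
      hbad t (X' t ω') (Y' t ω') (zItil (Z' t ω')) ω ω' hss
    rw [hXm t ht.le ω ω' hss, hYm t ht.le ω ω' hss, hXm' t ht.le ω ω' hss,
      hYm' t ht.le ω ω' hss, show zItil (Z t ω) = zItil (Z t ω') from by
        rw [hZm t ht ω ω' hss],
      show zItil (Z' t ω) = zItil (Z' t ω') from by rw [hZm' t ht ω ω' hss],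
      hb1, hb2]
  have hshm : ∀ t < T, ∀ j, measF W t (fun ω => sh t ω j) := by
    intro t ht j ω ω' hss
    show (σ t ω (X t ω) (Y t ω) (zItil (Z t ω)) -
        σ t ω (X' t ω) (Y' t ω) (zItil (Z' t ω))) j
      = (σ t ω' (X t ω') (Y t ω') (zItil (Z t ω')) -
        σ t ω' (X' t ω') (Y' t ω') (zItil (Z' t ω'))) j
    have hs1 : σ t ω (X t ω') (Y t ω') (zItil (Z t ω'))
        = σ t ω' (X t ω') (Y t ω') (zItil (Z t ω')) :=
      hsad t (X t ω') (Y t ω') (zItil (Z t ω')) ω ω' hss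
    have hs2 : σ t ω (X' t ω') (Y' t ω') (zItil (Z' t ω'))
        = σ t ω' (X' t ω') (Y' t ω') (zItil (Z' t ω')) :=
      hsad t (X' t ω') (Y' t ω') (zItil (Z' t ω')) ω ω' hss
    rw [hXm t ht.le ω ω' hss, hYm t ht.le ω ω' hss, hXm' t ht.le ω ω' hss,
      hYm' t ht.le ω ω' hss, show zItil (Z t ω) = zItil (Z t ω') from by
        rw [hZm t ht ω ω' hss],
      show zItil (Z' t ω) = zItil (Z' t ω') from by rw [hZm' t ht ω ω' hss],
      hs1, hs2]
  -- difference equations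
  have hxe : ∀ t < T, ∀ ω, xh (t+1) ω
      = xh t ω + bh t ω + dotProduct (sh t ω) (Mdiff P W t ω) := by
    intro t ht ω
    have e1 := hXe t ht ω
    have e2 := hXe' t ht ω
    have e3 : dotProduct (sh t ω) (Mdiff P W t ω)
        = dotProduct (σ t ω (X t ω) (Y t ω) (zItil (Z t ω))) (Mdiff P W t ω)
          - dotProduct (σ t ω (X' t ω) (Y' t ω) (zItil (Z' t ω))) (Mdiff P W t ω) :=
      sub_dotProduct _ _ _
    show X (t+1) ω - X' (t+1) ω = _
    rw [e3]
    show X (t+1) ω - X' (t+1) ω = (X t ω - X' t ω) +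
      (b t ω (X t ω) (Y t ω) (zItil (Z t ω)) -
        b t ω (X' t ω) (Y' t ω) (zItil (Z' t ω))) + _
    linarith [e1, e2]
  have hye : ∀ t < T, ∀ ω, yh (t+1) ω
      = yh t ω - fh (t+1) ω + dotProduct (zh t ω) (Mdiff P W t ω) := by
    intro t ht ω
    have e1 := hYe t ht ω
    have e2 := hYe' t ht ω
    have e3 : dotProduct (zh t ω) (Mdiff P W t ω)
        = dotProduct (Z t ω) (Mdiff P W t ω) - dotProduct (Z' t ω) (Mdiff P W t ω) :=
      sub_dotProduct _ _ _
    show Y (t+1) ω - Y' (t+1) ω = _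
    rw [e3]
    show Y (t+1) ω - Y' (t+1) ω = (Y t ω - Y' t ω) -
      (f (t+1) ω (X (t+1) ω) (Y (t+1) ω) (zItil (Z (t+1) ω)) -
        f (t+1) ω (X' (t+1) ω) (Y' (t+1) ω) (zItil (Z' (t+1) ω))) + _
    linarith [e1, e2]
  -- one-step identity
  have step : ∀ t < T,
      (∑ ω, P.p ω * (xh (t+1) ω * yh (t+1) ω)) - (∑ ω, P.p ω * (xh t ω * yh t ω))
      = ∑ ω, P.p ω * (bh t ω * yh t ω
          + dotProduct (Matrix.vecMul (sh t ω) (EMM P W t ω)) (zh t ω)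
          - xh (t+1) ω * fh (t+1) ω) := by
    intro t ht
    have hpt : ∀ ω, P.p ω * (xh (t+1) ω * yh (t+1) ω) - P.p ω * (xh t ω * yh t ω)
        = P.p ω * (bh t ω * yh t ω - xh (t+1) ω * fh (t+1) ω)
          + P.p ω * (yh t ω * dotProduct (sh t ω) (Mdiff P W t ω))
          + P.p ω * ((xh t ω + bh t ω) * dotProduct (zh t ω) (Mdiff P W t ω))
          + P.p ω * (dotProduct (sh t ω) (Mdiff P W t ω) *
              dotProduct (zh t ω) (Mdiff P W t ω)) := by
      intro ω
      rw [hxe t ht ω, hye t ht ω]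
      ring
    rw [← Finset.sum_sub_distrib, Finset.sum_congr rfl fun ω _ => hpt ω]
    simp only [Finset.sum_add_distrib]
    rw [S15.mart P W t (yh t) (hyhm t ht.le) (sh t) (hshm t ht),
      S15.mart P W t (fun ω => xh t ω + bh t ω)
        (fun ω ω' hss => by
          show xh t ω + bh t ω = xh t ω' + bh t ω'
          rw [hxhm t ht.le ω ω' hss, hbhm t ht ω ω' hss]) (zh t) (hzhm t ht),
      S15.quad P W t (sh t) (zh t) (hshm t ht) (hzhm t ht)]
    rw [add_zero, add_zero, ← Finset.sum_add_distrib]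
    exact Finset.sum_congr rfl fun ω _ => by ring
  -- telescoping
  have hxh0 : ∀ ω, xh 0 ω = 0 := by
    intro ω; show X 0 ω - X' 0 ω = 0; rw [hX0 ω, hX0' ω, sub_self]
  have tele : (∑ ω, P.p ω * (xh T ω * yh T ω))
      = ∑ t ∈ Finset.range T, ∑ ω, P.p ω * (bh t ω * yh t ω
          + dotProduct (Matrix.vecMul (sh t ω) (EMM P W t ω)) (zh t ω)
          - xh (t+1) ω * fh (t+1) ω) := by
    have h0 : (∑ ω, P.p ω * (xh 0 ω * yh 0 ω)) = 0 := by
      apply Finset.sum_eq_zero; intro ω _; rw [hxh0 ω]; ring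
    calc (∑ ω, P.p ω * (xh T ω * yh T ω))
        = (∑ ω, P.p ω * (xh T ω * yh T ω)) - (∑ ω, P.p ω * (xh 0 ω * yh 0 ω)) := by
          rw [h0, sub_zero]
      _ = ∑ t ∈ Finset.range T, ((∑ ω, P.p ω * (xh (t+1) ω * yh (t+1) ω))
            - (∑ ω, P.p ω * (xh t ω * yh t ω))) :=
          (Finset.sum_range_sub (fun t => ∑ ω, P.p ω * (xh t ω * yh t ω)) T).symm
      _ = _ := Finset.sum_congr rfl fun t htt => step t (Finset.mem_range.1 htt)
  -- abbreviations for the per-time expectations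
  set u : ℕ → ℝ := fun t => ∑ ω, P.p ω * (bh t ω * yh t ω
      + dotProduct (Matrix.vecMul (sh t ω) (EMM P W t ω)) (zh t ω)) with hudef
  set v : ℕ → ℝ := fun t => ∑ ω, P.p ω * (-(xh t ω * fh t ω)) with hvdef
  have hsplit : ∀ t ∈ Finset.range T,
      (∑ ω, P.p ω * (bh t ω * yh t ω
          + dotProduct (Matrix.vecMul (sh t ω) (EMM P W t ω)) (zh t ω)
          - xh (t+1) ω * fh (t+1) ω)) = u t + v (t+1) := by
    intro t _
    rw [hudef, hvdef, ← Finset.sum_add_distrib]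
    exact Finset.sum_congr rfl fun ω _ => by ring
  have htot : (∑ ω, P.p ω * (xh T ω * yh T ω))
      = u 0 + (∑ t ∈ Finset.Ico 1 T, (u t + v t)) + v T := by
    rw [tele, Finset.sum_congr rfl hsplit, Finset.sum_add_distrib]
    have e1 : (∑ t ∈ Finset.range T, u t) = u 0 + ∑ t ∈ Finset.Ico 1 T, u t := by
      rw [Finset.range_eq_Ico, Finset.sum_eq_sum_Ico_succ_bot (by omega : 0 < T)]
    have e2 : (∑ t ∈ Finset.range T, v (t+1)) = (∑ t ∈ Finset.Ico 1 T, v t) + v T := by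
      have e3 : (∑ t ∈ Finset.Ico 1 (T+1), v t) = ∑ t ∈ Finset.range T, v (t+1) := by
        rw [Finset.sum_Ico_eq_sum_range]
        simp [add_comm]
      rw [← e3, Finset.sum_Ico_succ_top hT]
    rw [e1, e2, Finset.sum_add_distrib]
    ring
  -- quantities that must vanish
  set A : ℝ := ∑ ω, P.p ω * (xh T ω)^2 with hAdef
  set B0 : ℝ := ∑ ω, P.p ω * ((yh 0 ω)^2 + nr (zItil (zh 0 ω))^2) with hBdef
  set CC : ℕ → ℝ := fun t =>
    ∑ ω, P.p ω * ((|xh t ω| + |yh t ω| + nr (zItil (zh t ω)))^2) with hCdef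
  -- bounds from monotonicity
  have hu0 : u 0 ≤ -c2 * B0 := by
    rw [hudef, hBdef, Finset.mul_sum]
    refine Finset.sum_le_sum fun ω _ => ?_
    rw [show -c2 * (P.p ω * ((yh 0 ω)^2 + nr (zItil (zh 0 ω))^2))
        = P.p ω * (-c2 * ((yh 0 ω)^2 + nr (zItil (zh 0 ω))^2)) from by ring]
    refine mul_le_mul_of_nonneg_left ?_ (P.pos ω).le
    simp only [hbhdef, hyhdef, hshdef, hzhdef]
    exact hmono0 ω (X 0 ω) (Y 0 ω) (X' 0 ω) (Y' 0 ω) (Z 0 ω) (Z' 0 ω)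
  have hmid : ∀ t ∈ Finset.Ico 1 T, u t + v t ≤ -c2 * CC t := by
    intro t htt
    obtain ⟨ht1, ht2⟩ := Finset.mem_Ico.1 htt
    rw [hudef, hvdef, hCdef, ← Finset.sum_add_distrib, Finset.mul_sum]
    refine Finset.sum_le_sum fun ω _ => ?_
    rw [show -c2 * (P.p ω * ((|xh t ω| + |yh t ω| + nr (zItil (zh t ω)))^2))
        = P.p ω * (-c2 * ((|xh t ω| + |yh t ω| + nr (zItil (zh t ω)))^2)) from by ring,
      show P.p ω * (bh t ω * yh t ω
            + dotProduct (Matrix.vecMul (sh t ω) (EMM P W t ω)) (zh t ω))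
          + P.p ω * (-(xh t ω * fh t ω))
        = P.p ω * (-(xh t ω * fh t ω) + bh t ω * yh t ω
            + dotProduct (Matrix.vecMul (sh t ω) (EMM P W t ω)) (zh t ω)) from by ring]
    refine mul_le_mul_of_nonneg_left ?_ (P.pos ω).le
    simp only [hbhdef, hyhdef, hshdef, hzhdef, hxhdef, hfhdef]
    have hmm := hmono t ht1 ht2 ω (X t ω) (Y t ω) (X' t ω) (Y' t ω) (Z t ω) (Z' t ω)
    have e : -((X t ω - X' t ω) *
          (f t ω (X t ω) (Y t ω) (zItil (Z t ω)) -
            f t ω (X' t ω) (Y' t ω) (zItil (Z' t ω))))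
        = (-(f t ω (X t ω) (Y t ω) (zItil (Z t ω))) +
            f t ω (X' t ω) (Y' t ω) (zItil (Z' t ω))) * (X t ω - X' t ω) := by ring
    rw [e]
    exact hmm
  have hvT : v T ≤ -c2 * A := by
    rw [hvdef, hAdef, Finset.mul_sum]
    refine Finset.sum_le_sum fun ω _ => ?_
    rw [show -c2 * (P.p ω * (xh T ω)^2) = P.p ω * (-c2 * (xh T ω)^2) from by ring]
    refine mul_le_mul_of_nonneg_left ?_ (P.pos ω).le
    simp only [hxhdef, hfhdef]
    have e : -((X T ω - X' T ω) *
          (f T ω (X T ω) (Y T ω) (zItil (Z T ω)) -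
            f T ω (X' T ω) (Y' T ω) (zItil (Z' T ω))))
        = (-(f T ω (X T ω) (Y T ω) (zItil (Z T ω))) +
            f T ω (X' T ω) (Y' T ω) (zItil (Z' T ω))) * (X T ω - X' T ω) := by ring
    rw [e]
    exact hmonoT ω (X T ω) (Y T ω) (X' T ω) (Y' T ω) (zItil (Z T ω)) (zItil (Z' T ω))
  have hfinal : c2 * A ≤ ∑ ω, P.p ω * (xh T ω * yh T ω) := by
    rw [hAdef, Finset.mul_sum]
    refine Finset.sum_le_sum fun ω _ => ?_
    rw [show c2 * (P.p ω * (xh T ω)^2) = P.p ω * (c2 * (xh T ω)^2) from by ring]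
    refine mul_le_mul_of_nonneg_left ?_ (P.pos ω).le
    simp only [hxhdef, hyhdef]
    rw [show Y T ω - Y' T ω = h ω (X T ω) - h ω (X' T ω) from by rw [hYT ω, hYT' ω]]
    have := hmonoh ω (X T ω) (X' T ω)
    nlinarith [this]
  -- nonnegativity
  have hA0 : 0 ≤ A := Finset.sum_nonneg fun ω _ =>
    mul_nonneg (P.pos ω).le (sq_nonneg _)
  have hB0nn : 0 ≤ B0 := Finset.sum_nonneg fun ω _ =>
    mul_nonneg (P.pos ω).le (add_nonneg (sq_nonneg _) (sq_nonneg _))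
  have hCnn : ∀ t, 0 ≤ CC t := fun t => Finset.sum_nonneg fun ω _ =>
    mul_nonneg (P.pos ω).le (sq_nonneg _)
  have hSCnn : 0 ≤ ∑ t ∈ Finset.Ico 1 T, CC t :=
    Finset.sum_nonneg fun t _ => hCnn t
  -- combine
  have hchain : c2 * A ≤ -c2 * B0 + (-c2 * ∑ t ∈ Finset.Ico 1 T, CC t) + (-c2 * A) := by
    have h1 : c2 * A ≤ u 0 + (∑ t ∈ Finset.Ico 1 T, (u t + v t)) + v T := by
      rw [← htot]; exact hfinal
    have h2 : (∑ t ∈ Finset.Ico 1 T, (u t + v t)) ≤ ∑ t ∈ Finset.Ico 1 T, (-c2 * CC t) :=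
      Finset.sum_le_sum hmid
    have h3 : (∑ t ∈ Finset.Ico 1 T, (-c2 * CC t)) = -c2 * ∑ t ∈ Finset.Ico 1 T, CC t := by
      rw [Finset.mul_sum]
    linarith [h1, h2, hu0, hvT, h3.le, h3.ge]
  have hkey : 2 * A + B0 + (∑ t ∈ Finset.Ico 1 T, CC t) ≤ 0 := by
    have e : c2 * (2 * A + B0 + (∑ t ∈ Finset.Ico 1 T, CC t))
        = c2 * A + c2 * B0 + c2 * (∑ t ∈ Finset.Ico 1 T, CC t) + c2 * A := by ring
    have h0 : c2 * (2 * A + B0 + (∑ t ∈ Finset.Ico 1 T, CC t)) ≤ c2 * 0 := by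
      rw [mul_zero, e]; linarith [hchain]
    exact le_of_mul_le_mul_left h0 hc2
  have hAz : A = 0 := le_antisymm (by linarith) hA0
  have hBz : B0 = 0 := le_antisymm (by linarith) hB0nn
  have hSz : (∑ t ∈ Finset.Ico 1 T, CC t) = 0 := le_antisymm (by linarith) hSCnn
  have hCz : ∀ t ∈ Finset.Ico 1 T, CC t = 0 :=
    fun t htt => (Finset.sum_eq_zero_iff_of_nonneg (fun t _ => hCnn t)).1 hSz t htt
  -- pointwise conclusions
  have hxT : ∀ ω, xh T ω = 0 := by
    intro ω
    have h2 := S15.ex_zero P (φ := fun ω => (xh T ω)^2)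
      (fun ω => sq_nonneg _) (hAdef.symm.trans hAz) ω
    exact sq_eq_zero_iff.1 h2
  have hB0pt : ∀ ω, yh 0 ω = 0 ∧ (∀ j, zItil (zh 0 ω) j = 0) := by
    intro ω
    have h2 := S15.ex_zero P (φ := fun ω => (yh 0 ω)^2 + nr (zItil (zh 0 ω))^2)
      (fun ω => add_nonneg (sq_nonneg _) (sq_nonneg _)) (hBdef.symm.trans hBz) ω
    have hy2 : (yh 0 ω)^2 = 0 := by nlinarith [sq_nonneg (yh 0 ω), sq_nonneg (nr (zItil (zh 0 ω)))]
    have hn2 : (nr (zItil (zh 0 ω)))^2 = 0 := by nlinarith [sq_nonneg (yh 0 ω), sq_nonneg (nr (zItil (zh 0 ω)))]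
    exact ⟨sq_eq_zero_iff.1 hy2, S15.nr_eq_zero (sq_eq_zero_iff.1 hn2)⟩
  have hCpt : ∀ t ∈ Finset.Ico 1 T, ∀ ω,
      xh t ω = 0 ∧ yh t ω = 0 ∧ (∀ j, zItil (zh t ω) j = 0) := by
    intro t htt ω
    have h2 := S15.ex_zero P
      (φ := fun ω => (|xh t ω| + |yh t ω| + nr (zItil (zh t ω)))^2)
      (fun ω => sq_nonneg _) ((congrFun hCdef t).symm.trans (hCz t htt)) ω
    have hsum : |xh t ω| + |yh t ω| + nr (zItil (zh t ω)) = 0 := sq_eq_zero_iff.1 h2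
    refine ⟨abs_eq_zero.1 (by
        linarith [abs_nonneg (yh t ω), S15.nr_nonneg (zItil (zh t ω)), abs_nonneg (xh t ω)]),
      abs_eq_zero.1 (by
        linarith [abs_nonneg (xh t ω), S15.nr_nonneg (zItil (zh t ω)), abs_nonneg (yh t ω)]),
      S15.nr_eq_zero (by
        linarith [abs_nonneg (xh t ω), abs_nonneg (yh t ω),
          S15.nr_nonneg (zItil (zh t ω))])⟩
  constructor
  · intro t ht ω
    by_cases ht0 : t = 0
    · subst ht0
      exact ⟨by rw [hX0 ω, hX0' ω], sub_eq_zero.1 (hB0pt ω).1⟩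
    by_cases htT : t = T
    · subst htT
      have hx : X t ω = X' t ω := sub_eq_zero.1 (hxT ω)
      exact ⟨hx, by rw [hYT ω, hYT' ω, hx]⟩
    · have htt : t ∈ Finset.Ico 1 T := Finset.mem_Ico.2 ⟨by omega, by omega⟩
      obtain ⟨h1, h2, _⟩ := hCpt t htt ω
      exact ⟨sub_eq_zero.1 h1, sub_eq_zero.1 h2⟩
  · intro t ht ω
    have hZI : ∀ j, zItil (zh t ω) j = 0 := by
      by_cases ht0 : t = 0
      · subst ht0; exact (hB0pt ω).2
      · exact (hCpt t (Finset.mem_Ico.2 ⟨by omega, ht⟩) ω).2.2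
    have hconst : ∀ i, zh t ω i = zh t ω (Fin.last n) := by
      intro i
      induction i using Fin.lastCases with
      | last => rfl
      | cast j =>
        have hj := hZI j
        rw [S15.zItil_eq] at hj
        linarith [hj]
    have hdot : dotProduct (zh t ω) (Mdiff P W t ω) = 0 := by
      calc dotProduct (zh t ω) (Mdiff P W t ω)
          = ∑ i, zh t ω i * Mdiff P W t ω i := rfl
        _ = ∑ i, zh t ω (Fin.last n) * Mdiff P W t ω i :=
            Finset.sum_congr rfl fun i _ => by rw [hconst i]
        _ = zh t ω (Fin.last n) * ∑ i, Mdiff P W t ω i := by rw [Finset.mul_sum]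
        _ = 0 := by rw [S15.sum_Mdiff]; ring
    have hsp : dotProduct (Z t ω) (Mdiff P W t ω) - dotProduct (Z' t ω) (Mdiff P W t ω)
        = 0 := by
      rw [← sub_dotProduct]
      exact hdot
    linarith [hsp]
end
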